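/- arXiv:1608.03979 — 2 statements merged into one kernel-verified Lean document; each statement's English description precedes it below -/
import Mathlib

section
/- For each α ∈ ℝ, the map φ_α : G → G is injective with open range φ_α(G), is of class C^∞ with Fréchet derivative at a ∈ G given by u ↦ exp_G(((1−α)/2)·a)·u, and its inverse φ_α⁻¹ : φ_α(G) → G is of class C^∞. Moreover, for all α, β ∈ ℝ and all a ∈ G, the Fréchet derivative of the transition map φ_α∘φ_β⁻¹ : φ_β(G) → G at the point φ_β(a) is the continuous linear map u ↦ exp_G(((β−α)/2)·a)·u. -/
open MeasureTheory BoundedContinuousFunction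

noncomputable section

namespace Paper

variable {Y : Type*} [TopologicalSpace Y]

/-- Pointwise exponential map on `G = C_b(B;ℝ)`: `expG a x = exp (a x)`. -/
def expG (a : BoundedContinuousFunction Y ℝ) : BoundedContinuousFunction Y ℝ :=
  BoundedContinuousFunction.ofNormedAddCommGroup (fun x => Real.exp (a x))
    (Real.continuous_exp.comp a.continuous) (Real.exp ‖a‖)
    (fun x => by
      rw [Real.norm_eq_abs, abs_of_pos (Real.exp_pos _)]
      exact Real.exp_le_exp.2 ((le_abs_self _).trans (a.norm_coe_le_norm x)))

@[simp] lemma expG_apply (a : BoundedContinuousFunction Y ℝ) (x : Y) :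
    expG a x = Real.exp (a x) := rfl

/-- The set `G⁺` of functions with strictly positive infimum. -/
def Gplus : Set (BoundedContinuousFunction Y ℝ) :=
  {a | ∃ ε > 0, ∀ x, ε ≤ a x}

/-- Amari's α-embedding chart `φ_α`. -/
def phi (α : ℝ) (a : BoundedContinuousFunction Y ℝ) : BoundedContinuousFunction Y ℝ :=
  if α = 1 then a else (2 / (1 - α)) • (expG (((1 - α) / 2) • a) - 1)

end Paper

/-!
For `α ≠ 1` put `c = (1 - α) / 2`. Then `φ_α a = c⁻¹ • (exp (c • a) - 1)`, where `exp` is the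
exponential of the commutative Banach algebra `C_b(B)`, which is computed pointwise. Hence `φ_α`
is analytic, with derivative at `a` the multiplication by the unit `exp (c • a)`. Pointwise
injectivity of `Real.exp` makes `φ_α` injective, and its range is the image under an affine
homeomorphism of the functions with positive infimum, an open set. The inverse function theorem
then makes `φ_α⁻¹` smooth with derivative the multiplication by `exp (-c • a)`, and the chain rule
gives the transition maps, since `exp (c_α • a) * exp (-c_β • a) = exp ((β - α) / 2 • a)`.
-/

open Filter Topology NormedSpace ContinuousLinearMap

section InverseFunction

variable {E F : Type*} [NormedAddCommGroup E] [NormedSpace ℝ E] [CompleteSpace E]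
  [NormedAddCommGroup F] [NormedSpace ℝ F]

theorem ContDiffAt.to_local_left_inverse {f : E → F} {f' : E ≃L[ℝ] F} {g : F → E} {a : E}
    {n : WithTop ℕ∞} (hf : ContDiffAt ℝ n f a) (hf' : HasFDerivAt f (f' : E →L[ℝ] F) a)
    (hn : n ≠ 0) (hg : ∀ᶠ x in 𝓝 a, g (f x) = x) : ContDiffAt ℝ n g (f a) :=
  (hf.to_localInverse hf' hn).congr_of_eventuallyEq
    ((hf.hasStrictFDerivAt' hf' hn).localInverse_unique hg)

end InverseFunction

section BanachAlgebra

variable {𝔸 : Type*} [NormedCommRing 𝔸] [NormedAlgebra ℝ 𝔸] [CompleteSpace 𝔸]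

theorem NormedSpace.contDiff_exp {n : WithTop ℕ∞} : ContDiff ℝ n (exp : 𝔸 → 𝔸) :=
  AnalyticOnNhd.contDiff fun x _ => exp_analytic x

theorem hasStrictFDerivAt_exp_smul (c : ℝ) (a : 𝔸) :
    HasStrictFDerivAt (fun b : 𝔸 => exp (c • b)) (c • mul ℝ 𝔸 (exp (c • a))) a := by
  have h := (hasStrictFDerivAt_exp (𝕂 := ℝ) (x := c • a)).comp a
    ((c • ContinuousLinearMap.id ℝ 𝔸).hasStrictFDerivAt)
  refine h.congr_fderiv ?_
  ext u
  simp

end BanachAlgebra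

namespace Paper

variable {Y : Type*} [TopologicalSpace Y]

local notation "G" => BoundedContinuousFunction Y ℝ

theorem expG_eq_exp : expG (Y := Y) = exp := by
  ext a x
  let evalₐ : G →ₐ[ℝ] ℝ := (ContinuousMap.evalAlgHom ℝ ℝ x).comp (toContinuousMapₐ ℝ)
  rw [expG_apply, Real.exp_eq_exp_ℝ]
  exact (map_exp evalₐ (continuous_eval_const x) a).symm

theorem expG_add (a b : G) : expG (a + b) = expG a * expG b := by
  simp only [expG_eq_exp, exp_add]

theorem expG_mul_expG_neg (a : G) : expG a * expG (-a) = 1 := by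
  rw [← expG_add, add_neg_cancel, expG_eq_exp, exp_zero]

theorem expG_injective : Function.Injective (expG (Y := Y)) := fun _ _ hab =>
  ext fun x => Real.exp_injective (congrArg (· x) hab)

theorem isOpen_Gplus : IsOpen (Gplus (Y := Y)) := by
  refine Metric.isOpen_iff.2 fun a ⟨ε, hε, ha⟩ => ⟨ε / 2, by positivity, fun b hb => ?_⟩
  refine ⟨ε / 2, by positivity, fun x => ?_⟩
  have hbx : |b x - a x| < ε / 2 :=
    (dist_coe_le_dist x).trans_lt (Metric.mem_ball.1 hb)
  linarith [(abs_lt.1 hbx).1, ha x]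

theorem range_expG : Set.range (expG (Y := Y)) = Gplus := by
  ext g
  constructor
  · rintro ⟨a, rfl⟩
    refine ⟨Real.exp (-‖a‖), Real.exp_pos _, fun x => Real.exp_le_exp.2 ?_⟩
    linarith [(abs_le.1 (Real.norm_eq_abs (a x) ▸ a.norm_coe_le_norm x)).1]
  · rintro ⟨ε, hε, hg⟩
    have hg_pos : ∀ x, 0 < g x := fun x => hε.trans_le (hg x)
    have hlog_le : ∀ x, ‖Real.log (g x)‖ ≤ max |Real.log ε| |Real.log ‖g‖| := fun x =>
      abs_le_max_abs_abs (Real.log_le_log hε (hg x))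
        (Real.log_le_log (hg_pos x) ((le_abs_self _).trans (g.norm_coe_le_norm x)))
    refine ⟨ofNormedAddCommGroup (fun x => Real.log (g x))
      (g.continuous.log fun x => (hg_pos x).ne') _ hlog_le, ?_⟩
    ext x
    exact Real.exp_log (hg_pos x)

theorem phi_one : phi (Y := Y) 1 = id :=
  funext fun _ => if_pos rfl

theorem phi_eq_comp {α : ℝ} (hα : α ≠ 1) :
    phi (Y := Y) α =
      (fun g : G => (2 / (1 - α)) • (g - 1)) ∘ expG ∘ fun a : G => ((1 - α) / 2) • a :=
  funext fun _ => if_neg hα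

theorem hasStrictFDerivAt_phi (α : ℝ) (a : G) :
    HasStrictFDerivAt (phi α) (mul ℝ G (expG (((1 - α) / 2) • a))) a := by
  rcases eq_or_ne α 1 with rfl | hα
  · rw [phi_one, sub_self, zero_div, zero_smul, expG_eq_exp, exp_zero]
    convert hasStrictFDerivAt_id a
    ext u
    simp
  · have hc : 2 / (1 - α) * ((1 - α) / 2) = 1 := by
      field_simp [sub_ne_zero.2 hα.symm]
    have h := ((hasStrictFDerivAt_exp_smul ((1 - α) / 2) a).sub_const 1).const_smul (2 / (1 - α))
    rw [smul_smul, hc, one_smul] at h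
    rw [phi_eq_comp hα, expG_eq_exp]
    exact h

theorem contDiff_phi (α : ℝ) {n : WithTop ℕ∞} : ContDiff ℝ n (phi (Y := Y) α) := by
  rcases eq_or_ne α 1 with rfl | hα
  · rw [phi_one]
    exact contDiff_id
  · rw [phi_eq_comp hα, expG_eq_exp]
    exact ((contDiff_exp.comp (contDiff_id.const_smul _)).sub contDiff_const).const_smul _

theorem phi_injective (α : ℝ) : Function.Injective (phi (Y := Y) α) := by
  rcases eq_or_ne α 1 with rfl | hα
  · rw [phi_one]
    exact Function.injective_id
  · have h1α : (1 - α) ≠ 0 := sub_ne_zero.2 hα.symm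
    rw [phi_eq_comp hα]
    exact ((smul_right_injective G (div_ne_zero two_ne_zero h1α)).comp sub_left_injective).comp
      (expG_injective.comp (smul_right_injective G (div_ne_zero h1α two_ne_zero)))

theorem isOpen_range_phi (α : ℝ) : IsOpen (Set.range (phi (Y := Y) α)) := by
  rcases eq_or_ne α 1 with rfl | hα
  · simp [phi_one]
  · have h1α : (1 - α) ≠ 0 := sub_ne_zero.2 hα.symm
    have hsurj : Function.Surjective fun a : G => ((1 - α) / 2) • a :=
      (MulAction.bijective₀ (div_ne_zero h1α two_ne_zero)).surjective
    rw [phi_eq_comp hα, Set.range_comp, hsurj.range_comp, range_expG]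
    exact ((isOpenMap_smul₀ (div_ne_zero two_ne_zero h1α)).comp (isOpenMap_sub_right 1))
      _ isOpen_Gplus

/-- Multiplication by the unit `expG (((1 - α) / 2) • a)`, i.e. the derivative of `φ_α` at `a`. -/
def phiDerivEquiv (α : ℝ) (a : G) : G ≃L[ℝ] G :=
  ContinuousLinearEquiv.smulLeft (Units.mkOfMulEqOne _ _ (expG_mul_expG_neg (((1 - α) / 2) • a)))

theorem hasStrictFDerivAt_invFun_phi (α : ℝ) (a : G) :
    HasStrictFDerivAt (Function.invFun (phi α))
      (mul ℝ G (expG (-(((1 - α) / 2) • a)))) (phi α a) :=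
  HasStrictFDerivAt.to_local_left_inverse (f' := phiDerivEquiv α a) (hasStrictFDerivAt_phi α a)
    (Eventually.of_forall (Function.leftInverse_invFun (phi_injective α)))

theorem contDiffAt_invFun_phi (α : ℝ) (a : G) {n : WithTop ℕ∞} (hn : n ≠ 0) :
    ContDiffAt ℝ n (Function.invFun (phi α)) (phi α a) :=
  (contDiff_phi α).contDiffAt.to_local_left_inverse
    (f' := phiDerivEquiv α a) (hasStrictFDerivAt_phi α a).hasFDerivAt hn
    (Eventually.of_forall (Function.leftInverse_invFun (phi_injective α)))

theorem contDiffOn_invFun_phi (α : ℝ) {n : WithTop ℕ∞} (hn : n ≠ 0) :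
    ContDiffOn ℝ n (Function.invFun (phi α)) (Set.range (phi (Y := Y) α)) := by
  rintro _ ⟨a, rfl⟩
  exact (contDiffAt_invFun_phi α a hn).contDiffWithinAt

theorem hasFDerivAt_phi_comp_invFun_phi (α β : ℝ) (a : G) :
    HasFDerivAt (phi α ∘ Function.invFun (phi β)) (mul ℝ G (expG (((β - α) / 2) • a)))
      (phi β a) := by
  have hφα : HasFDerivAt (phi α) (mul ℝ G (expG (((1 - α) / 2) • a)))
      (Function.invFun (phi β) (phi β a)) := by
    rw [Function.leftInverse_invFun (phi_injective β) a]
    exact (hasStrictFDerivAt_phi α a).hasFDerivAt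
  have hexp : expG (((β - α) / 2) • a) =
      expG (((1 - α) / 2) • a) * expG (-(((1 - β) / 2) • a)) := by
    rw [← expG_add]
    congr 1
    module
  refine (hφα.comp (phi β a) (hasStrictFDerivAt_invFun_phi β a).hasFDerivAt).congr_fderiv ?_
  ext u x
  simp [hexp, mul_assoc]

end Paper

theorem statement_4_general {X : Type*} [NormedAddCommGroup X]
    (B : Set X) (α : ℝ) :
    Function.Injective (Paper.phi (Y := B) α) ∧
    IsOpen (Set.range (Paper.phi (Y := B) α)) ∧
    ContDiff ℝ (⊤ : ℕ∞) (Paper.phi (Y := B) α) ∧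
    (∀ a : BoundedContinuousFunction B ℝ,
      HasFDerivAt (Paper.phi α)
        (ContinuousLinearMap.mul ℝ (BoundedContinuousFunction B ℝ)
          (Paper.expG (((1 - α) / 2) • a))) a) ∧
    (∃ ψ : BoundedContinuousFunction B ℝ → BoundedContinuousFunction B ℝ,
      (∀ a, ψ (Paper.phi α a) = a) ∧
      ContDiffOn ℝ (⊤ : ℕ∞) ψ (Set.range (Paper.phi (Y := B) α))) ∧
    (∀ β : ℝ, ∃ ψβ : BoundedContinuousFunction B ℝ → BoundedContinuousFunction B ℝ,
      (∀ a, ψβ (Paper.phi β a) = a) ∧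
      ∀ a : BoundedContinuousFunction B ℝ,
        HasFDerivAt (Paper.phi α ∘ ψβ)
          (ContinuousLinearMap.mul ℝ (BoundedContinuousFunction B ℝ)
            (Paper.expG (((β - α) / 2) • a))) (Paper.phi β a)) := by
  open Paper in
  refine ⟨phi_injective α, isOpen_range_phi α, contDiff_phi α,
    fun a => (hasStrictFDerivAt_phi α a).hasFDerivAt,
    ⟨_, Function.leftInverse_invFun (phi_injective α), contDiffOn_invFun_phi α (by simp)⟩,
    fun β => ⟨_, Function.leftInverse_invFun (phi_injective β),
      hasFDerivAt_phi_comp_invFun_phi α β⟩⟩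

/-- for each `α`, the chart `φ_α : G → G` is injective with open range,
is `C^∞` with Fréchet derivative `u ↦ exp_G(((1−α)/2)·a)·u` at `a`, its inverse is
`C^∞` on `φ_α(G)`, and the transition map `φ_α ∘ φ_β⁻¹` has Fréchet derivative
`u ↦ exp_G(((β−α)/2)·a)·u` at `φ_β(a)`. -/
theorem statement_4 {X : Type*} [NormedAddCommGroup X] [NormedSpace ℝ X]
    (B : Set X) (hB : IsOpen B) (hBne : B.Nonempty) (α : ℝ) :
    Function.Injective (Paper.phi (Y := B) α) ∧
    IsOpen (Set.range (Paper.phi (Y := B) α)) ∧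
    ContDiff ℝ (⊤ : ℕ∞) (Paper.phi (Y := B) α) ∧
    (∀ a : BoundedContinuousFunction B ℝ,
      HasFDerivAt (Paper.phi α)
        (ContinuousLinearMap.mul ℝ (BoundedContinuousFunction B ℝ)
          (Paper.expG (((1 - α) / 2) • a))) a) ∧
    (∃ ψ : BoundedContinuousFunction B ℝ → BoundedContinuousFunction B ℝ,
      (∀ a, ψ (Paper.phi α a) = a) ∧
      ContDiffOn ℝ (⊤ : ℕ∞) ψ (Set.range (Paper.phi (Y := B) α))) ∧
    (∀ β : ℝ, ∃ ψβ : BoundedContinuousFunction B ℝ → BoundedContinuousFunction B ℝ,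
      (∀ a, ψβ (Paper.phi β a) = a) ∧
      ∀ a : BoundedContinuousFunction B ℝ,
        HasFDerivAt (Paper.phi α ∘ ψβ)
          (ContinuousLinearMap.mul ℝ (BoundedContinuousFunction B ℝ)
            (Paper.expG (((β - α) / 2) • a))) (Paper.phi β a)) :=
  statement_4_general B α
end
end

section
/- Generalised cosine rule: for each α ∈ ℝ with α ≠ ±1 and all a, b, c ∈ G, D^α(a‖c) = D^α(a‖b) + D^α(b‖c) − ∫_B (φ_α(a) − φ_α(b))·(φ_{−α}(c) − φ_{−α}(b)) dμ. -/
/-!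
Once the product `(φ_α a - φ_α b)(φ_{-α} c - φ_{-α} b)` is expanded, the cosine rule is a linear
identity between the three terms of `D^α`, up to the correction `D^α(b‖b)`. That correction vanishes
pointwise, because `exp ((1 - α) t / 2) · exp ((1 + α) t / 2) = exp t`.
-/

open MeasureTheory BoundedContinuousFunction

noncomputable section

namespace Paper

variable {Y : Type*} [TopologicalSpace Y]

variable [MeasurableSpace Y]

/-- The α-divergence `D^α(a‖b)` (for `α ≠ ±1`) between the finite measures with
`μ`-densities `exp_G(a)` and `exp_G(b)`. -/
def Dalpha (μ : Measure Y) (α : ℝ) (a b : BoundedContinuousFunction Y ℝ) : ℝ :=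
  (2 / (1 + α)) * ∫ x, (phi (-1) a x - phi α a x) ∂μ
    + (2 / (1 - α)) * ∫ x, (phi (-1) b x - phi (-α) b x) ∂μ
    - ∫ x, phi α a x * phi (-α) b x ∂μ

/-- The extended Kullback–Leibler divergence `D^{−1}(a‖b)`. -/
def DKL (μ : Measure Y) (a b : BoundedContinuousFunction Y ℝ) : ℝ :=
  ∫ x, (expG b x - expG a x) ∂μ + ∫ x, expG a x * (a x - b x) ∂μ

end Paper

lemma integral_sub_mul_sub {Ω : Type*} [MeasurableSpace Ω] {μ : Measure Ω} {f g h k : Ω → ℝ}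
    (hfh : Integrable (fun x => f x * h x) μ) (hfk : Integrable (fun x => f x * k x) μ)
    (hgh : Integrable (fun x => g x * h x) μ) (hgk : Integrable (fun x => g x * k x) μ) :
    ∫ x, (f x - g x) * (h x - k x) ∂μ
      = ∫ x, f x * h x ∂μ - ∫ x, f x * k x ∂μ - ∫ x, g x * h x ∂μ + ∫ x, g x * k x ∂μ := by
  simp only [sub_mul, mul_sub]
  have hh : Integrable (fun x => f x * h x - g x * h x) μ := hfh.sub hgh
  have hk : Integrable (fun x => f x * k x - g x * k x) μ := hfk.sub hgk
  rw [integral_sub hh hk, integral_sub hfh hgh, integral_sub hfk hgk]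
  ring

/-- With `u = exp ((1 - α) t / 2)` and `v = exp ((1 + α) t / 2)`, so that `u v = exp t`, both sides
equal `4 (u - 1) (v - 1) / (1 - α²)`. -/
lemma phi_mul_phi_neg_eq (α t : ℝ) (hα1 : α ≠ 1) (hα2 : α ≠ -1) :
    2 / (1 + α) * (Real.exp t - 1 - 2 / (1 - α) * (Real.exp ((1 - α) / 2 * t) - 1))
      + 2 / (1 - α) * (Real.exp t - 1 - 2 / (1 + α) * (Real.exp ((1 + α) / 2 * t) - 1))
      = 2 / (1 - α) * (Real.exp ((1 - α) / 2 * t) - 1)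
        * (2 / (1 + α) * (Real.exp ((1 + α) / 2 * t) - 1)) := by
  have h1 : 1 + α ≠ 0 := fun h => hα2 (by linarith)
  have h2 : 1 - α ≠ 0 := fun h => hα1 (by linarith)
  have hexp : Real.exp t = Real.exp ((1 - α) / 2 * t) * Real.exp ((1 + α) / 2 * t) := by
    rw [← Real.exp_add]; ring_nf
  rw [hexp]
  field_simp
  ring

namespace Paper

variable {Y : Type*} [TopologicalSpace Y]

lemma phi_apply_of_ne_one {α : ℝ} (hα : α ≠ 1) (a : BoundedContinuousFunction Y ℝ) (x : Y) :
    phi α a x = 2 / (1 - α) * (Real.exp ((1 - α) / 2 * a x) - 1) := by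
  simp [phi, hα]

variable [MeasurableSpace Y] [OpensMeasurableSpace Y] (μ : Measure Y) [IsFiniteMeasure μ]

lemma integrable_mul (f g : BoundedContinuousFunction Y ℝ) :
    Integrable (fun x => f x * g x) μ :=
  (f * g).integrable μ

lemma Dalpha_self {α : ℝ} (hα1 : α ≠ 1) (hα2 : α ≠ -1) (b : BoundedContinuousFunction Y ℝ) :
    Dalpha μ α b b = 0 := by
  have hInt (f g : BoundedContinuousFunction Y ℝ) (r : ℝ) :
      Integrable (fun x => r * (f x - g x)) μ :=
    ((f.integrable μ).sub (g.integrable μ)).const_mul r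
  rw [Dalpha, ← integral_const_mul, ← integral_const_mul, ← integral_add (hInt _ _ _) (hInt _ _ _),
    sub_eq_zero]
  refine integral_congr_ae (Filter.Eventually.of_forall fun x => ?_)
  have hmα : -α ≠ 1 := fun h => hα2 (by linarith)
  simp only [phi_apply_of_ne_one hα1, phi_apply_of_ne_one hmα,
    phi_apply_of_ne_one (show (-1 : ℝ) ≠ 1 by norm_num), sub_neg_eq_add]
  norm_num only [one_add_one_eq_two, div_self, one_mul]
  exact phi_mul_phi_neg_eq α (b x) hα1 hα2

lemma Dalpha_eq_add_sub_Dalpha_self_sub_integral (α : ℝ) (a b c : BoundedContinuousFunction Y ℝ) :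
    Dalpha μ α a c
      = Dalpha μ α a b + Dalpha μ α b c - Dalpha μ α b b
        - ∫ x, (phi α a x - phi α b x) * (phi (-α) c x - phi (-α) b x) ∂μ := by
  rw [integral_sub_mul_sub (integrable_mul μ _ _) (integrable_mul μ _ _) (integrable_mul μ _ _)
    (integrable_mul μ _ _)]
  simp only [Dalpha]
  ring

end Paper

theorem statement_8_general {X : Type*} [NormedAddCommGroup X]
    [MeasurableSpace X] [OpensMeasurableSpace X]
    (B : Set X)
    (μ : Measure B) [IsProbabilityMeasure μ]
    (α : ℝ) (hα1 : α ≠ 1) (hα2 : α ≠ -1) (a b c : BoundedContinuousFunction B ℝ) :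
    Paper.Dalpha μ α a c
      = Paper.Dalpha μ α a b + Paper.Dalpha μ α b c
        - ∫ x, (Paper.phi α a x - Paper.phi α b x)
            * (Paper.phi (-α) c x - Paper.phi (-α) b x) ∂μ := by
  rw [Paper.Dalpha_eq_add_sub_Dalpha_self_sub_integral μ α a b c, Paper.Dalpha_self μ hα1 hα2 b,
    sub_zero]

/-- generalised cosine rule: for `α ≠ ±1` and all `a, b, c ∈ G`,
`D^α(a‖c) = D^α(a‖b) + D^α(b‖c) − ∫ (φ_α(a) − φ_α(b))·(φ_{−α}(c) − φ_{−α}(b)) dμ`. -/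
theorem statement_8 {X : Type*} [NormedAddCommGroup X] [NormedSpace ℝ X]
    [MeasurableSpace X] [OpensMeasurableSpace X]
    (B : Set X) (hB : IsOpen B) (hBne : B.Nonempty)
    (μ : Measure B) [IsProbabilityMeasure μ]
    (α : ℝ) (hα1 : α ≠ 1) (hα2 : α ≠ -1) (a b c : BoundedContinuousFunction B ℝ) :
    Paper.Dalpha μ α a c
      = Paper.Dalpha μ α a b + Paper.Dalpha μ α b c
        - ∫ x, (Paper.phi α a x - Paper.phi α b x)
            * (Paper.phi (-α) c x - Paper.phi (-α) b x) ∂μ :=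
  statement_8_general B μ α hα1 hα2 a b c
end
end
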